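/- arXiv:2109.02075 — 3 statements merged into one kernel-verified Lean document; each statement's English description precedes it below -/
import Mathlib

section
/- Consider the coupled Sylvester system (I − d_u Δt T₁)U − d_u Δt U T₂ᵀ − d_{vu} Δt (T₁ V + V T₂ᵀ) = R₁ and (I − d_v Δt T₁)V − d_v Δt V T₂ᵀ − d_{uv} Δt (T₁ U + U T₂ᵀ) = R₂. If T₁ = XΛ₁X⁻¹ and T₂ᵀ = YΛ₂Y⁻¹ with Λ₁, Λ₂ diagonal, then setting Û = X⁻¹UY, V̂ = X⁻¹VY, Q₁ = X⁻¹R₁Y, Q₂ = X⁻¹R₂Y, the system is equivalent to, for each entry (i,j), the 2×2 linear system with matrix S_{ij} = [[1 − d_uΔt μ_{ij}, −d_{vu}Δt μ_{ij}], [−d_{uv}Δt μ_{ij}, 1 − d_vΔt μ_{ij}]] applied to (Û_{ij}, V̂_{ij})ᵀ equaling ((Q₁)_{ij}, (Q₂)_{ij})ᵀ, where μ_{ij} = λᵢ^{(1)} + λⱼ^{(2)}. -/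
open Matrix

/-- Spectral diagonalization of the coupled Sylvester system arising from the
IMEX Euler step: the matrix system is equivalent to the family of `2×2`
linear systems for the entries of `Û = X⁻¹UY` and `V̂ = X⁻¹VY`. -/
theorem stmt_4 (n₁ n₂ : ℕ) (du dv duv dvu Δt : ℝ)
    (T₁ X : Matrix (Fin n₁) (Fin n₁) ℝ) (T₂ Y : Matrix (Fin n₂) (Fin n₂) ℝ)
    (lam₁ : Fin n₁ → ℝ) (lam₂ : Fin n₂ → ℝ)
    (hX : IsUnit X.det) (hY : IsUnit Y.det)
    (hT₁ : T₁ = X * Matrix.diagonal lam₁ * X⁻¹)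
    (hT₂ : T₂ᵀ = Y * Matrix.diagonal lam₂ * Y⁻¹)
    (U V R₁ R₂ : Matrix (Fin n₁) (Fin n₂) ℝ) :
    ((1 - (du * Δt) • T₁) * U - (du * Δt) • (U * T₂ᵀ)
          - (dvu * Δt) • (T₁ * V + V * T₂ᵀ) = R₁
      ∧ (1 - (dv * Δt) • T₁) * V - (dv * Δt) • (V * T₂ᵀ)
          - (duv * Δt) • (T₁ * U + U * T₂ᵀ) = R₂)
    ↔ (∀ (i : Fin n₁) (j : Fin n₂),
        (1 - du * Δt * (lam₁ i + lam₂ j)) * (X⁻¹ * U * Y) i j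
            + (-(dvu * Δt * (lam₁ i + lam₂ j))) * (X⁻¹ * V * Y) i j
          = (X⁻¹ * R₁ * Y) i j
        ∧ (-(duv * Δt * (lam₁ i + lam₂ j))) * (X⁻¹ * U * Y) i j
            + (1 - dv * Δt * (lam₁ i + lam₂ j)) * (X⁻¹ * V * Y) i j
          = (X⁻¹ * R₂ * Y) i j) := by
  have hX' : X⁻¹ * X = 1 := nonsing_inv_mul X hX
  have hX'' : X * X⁻¹ = 1 := mul_nonsing_inv X hX
  have hY' : Y⁻¹ * Y = 1 := nonsing_inv_mul Y hY
  have hY'' : Y * Y⁻¹ = 1 := mul_nonsing_inv Y hY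
  have conj : ∀ (M N : Matrix (Fin n₁) (Fin n₂) ℝ),
      M = N ↔ X⁻¹ * M * Y = X⁻¹ * N * Y := by
    intro M N
    constructor
    · intro h; rw [h]
    · intro h
      have h2 := congrArg (fun Z => X * Z * Y⁻¹) h
      simp only [Matrix.mul_assoc, hY'', Matrix.mul_one] at h2
      rwa [← Matrix.mul_assoc, hX'', Matrix.one_mul,
        ← Matrix.mul_assoc, hX'', Matrix.one_mul] at h2
  have key : ∀ (a b : ℝ) (P Q : Matrix (Fin n₁) (Fin n₂) ℝ),
      X⁻¹ * ((1 - a • T₁) * P - a • (P * T₂ᵀ) - b • (T₁ * Q + Q * T₂ᵀ)) * Y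
      = (X⁻¹ * P * Y)
        - a • (Matrix.diagonal lam₁ * (X⁻¹ * P * Y)
              + (X⁻¹ * P * Y) * Matrix.diagonal lam₂)
        - b • (Matrix.diagonal lam₁ * (X⁻¹ * Q * Y)
              + (X⁻¹ * Q * Y) * Matrix.diagonal lam₂) := by
    intro a b P Q
    rw [hT₁, hT₂]
    simp only [Matrix.mul_sub, Matrix.sub_mul, Matrix.mul_add, Matrix.add_mul,
      Matrix.mul_smul, Matrix.smul_mul, Matrix.mul_assoc, Matrix.one_mul,
      Matrix.mul_one, smul_add, hX', hY']
    rw [← Matrix.mul_assoc X⁻¹ X, hX', Matrix.one_mul,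
      ← Matrix.mul_assoc X⁻¹ X, hX', Matrix.one_mul]
    abel
  rw [conj (_ - _) R₁, conj (_ - _) R₂, key, key]
  rw [← Matrix.ext_iff, ← Matrix.ext_iff, ← forall_and]
  refine forall_congr' fun i => ?_
  rw [← forall_and]
  refine forall_congr' fun j => ?_
  simp only [Matrix.sub_apply, Matrix.smul_apply, Matrix.add_apply,
    Matrix.diagonal_mul, Matrix.mul_diagonal, smul_eq_mul]
  constructor
  · rintro ⟨h1, h2⟩
    constructor <;> [rw [← h1]; rw [← h2]] <;> ring
  · rintro ⟨h1, h2⟩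
    constructor <;> [rw [← h1]; rw [← h2]] <;> ring
end

section
/- T-HOSVD quasi-optimality upper bound: let 𝒳 ∈ ℝ^{n₁×⋯×n_d}, and for each mode j let Φ̄^{(j)} ∈ ℝ^{n_j×r_j} consist of the first r_j left singular vectors of the mode-j unfolding 𝒳_{(j)}. Define the truncated approximation 𝒳̄ = (Φ̄^{(1)}(Φ̄^{(1)})ᵀ, …, Φ̄^{(d)}(Φ̄^{(d)})ᵀ) · 𝒳. Then ‖𝒳 − 𝒳̄‖_F² ≤ Σ_{j=1}^{d} Σ_{i > r_j} σ_i(𝒳_{(j)})², where σ_i(𝒳_{(j)}) are the singular values of the mode-j unfolding. -/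
open Matrix

/-- Multilinear (mode-wise) multiplication of an order-`d` tensor by a family of
square matrices (one per mode). -/
noncomputable def tmul {d : ℕ} {n : Fin d → ℕ}
    (A : ∀ j, Matrix (Fin (n j)) (Fin (n j)) ℝ)
    (X : (∀ j, Fin (n j)) → ℝ) : (∀ j, Fin (n j)) → ℝ :=
  fun i => ∑ jj : ∀ j, Fin (n j), X jj * ∏ j, A j (i j) (jj j)

/-- The mode-`j` unfolding of an order-`d` tensor: the matrix whose columns are
the mode-`j` fibers. -/
def unfold {d : ℕ} {n : Fin d → ℕ} (X : (∀ k, Fin (n k)) → ℝ) (j : Fin d) :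
    Matrix (Fin (n j)) (∀ k : {k : Fin d // k ≠ j}, Fin (n k.1)) ℝ :=
  Matrix.of fun a o =>
    X (fun k => if h : k = j then cast (congrArg (fun t => Fin (n t)) h).symm a
                else o ⟨k, h⟩)

namespace THosvd
variable {d : ℕ} {n : Fin d → ℕ}

lemma tmul_zero_of (A : ∀ j, Matrix (Fin (n j)) (Fin (n j)) ℝ) (m : Fin d)
    (h : A m = 0) (X : (∀ j, Fin (n j)) → ℝ) : tmul A X = 0 := by
  funext i
  refine Finset.sum_eq_zero fun jj _ => ?_
  rw [Finset.prod_eq_zero (Finset.mem_univ m) (by simp [h]), mul_zero]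

lemma tmul_one (X : (∀ j, Fin (n j)) → ℝ) :
    tmul (fun _ => (1 : Matrix _ _ ℝ)) X = X := by
  funext i
  have key : ∀ jj : ∀ j, Fin (n j),
      (∏ j, (1 : Matrix (Fin (n j)) (Fin (n j)) ℝ) (i j) (jj j)) = if jj = i then 1 else 0 := by
    intro jj
    simp only [Matrix.one_apply, Finset.prod_boole]
    simp [funext_iff, eq_comm]
  simp only [tmul, key, mul_ite, mul_one, mul_zero, Finset.sum_ite_eq',
    Finset.mem_univ, if_pos]


lemma tmul_sub_mode (m : Fin d) (A A' A'' : ∀ j, Matrix (Fin (n j)) (Fin (n j)) ℝ)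
    (hne : ∀ k, k ≠ m → A k = A' k ∧ A'' k = A k) (hm : A'' m = A m - A' m)
    (X : (∀ j, Fin (n j)) → ℝ) :
    tmul A X - tmul A' X = tmul A'' X := by
  funext i
  simp only [Pi.sub_apply, tmul, ← Finset.sum_sub_distrib]
  refine Finset.sum_congr rfl fun jj _ => ?_
  have hA : ∀ (C : ∀ j, Matrix (Fin (n j)) (Fin (n j)) ℝ),
      (∏ j, C j (i j) (jj j)) = C m (i m) (jj m) * ∏ j ∈ Finset.univ \ {m}, C j (i j) (jj j) :=
    fun C => Finset.prod_eq_mul_prod_sdiff_singleton_of_mem (Finset.mem_univ m) _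
  rw [hA A, hA A', hA A'']
  have hrest : ∀ (C C' : ∀ j, Matrix (Fin (n j)) (Fin (n j)) ℝ),
      (∀ k, k ≠ m → C k = C' k) →
      (∏ j ∈ Finset.univ \ {m}, C j (i j) (jj j)) = ∏ j ∈ Finset.univ \ {m}, C' j (i j) (jj j) := by
    intro C C' h
    refine Finset.prod_congr rfl fun k hk => ?_
    rw [h k (by simpa using (Finset.mem_sdiff.mp hk).2)]
  rw [hrest A' A (fun k hk => ((hne k hk).1).symm), hrest A'' A (fun k hk => (hne k hk).2)]
  rw [hm]
  simp only [Matrix.sub_apply]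
  ring

lemma tmul_adjoint (A : ∀ j, Matrix (Fin (n j)) (Fin (n j)) ℝ)
    (X Y : (∀ j, Fin (n j)) → ℝ) :
    ∑ i, tmul A X i * Y i = ∑ i, X i * tmul (fun j => (A j)ᵀ) Y i := by
  simp only [tmul, Finset.sum_mul, Finset.mul_sum, Matrix.transpose_apply]
  rw [Finset.sum_comm]
  exact Finset.sum_congr rfl fun i _ => Finset.sum_congr rfl fun jj _ => by ring

lemma tmul_comp (A B : ∀ j, Matrix (Fin (n j)) (Fin (n j)) ℝ)
    (X : (∀ j, Fin (n j)) → ℝ) :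
    tmul A (tmul B X) = tmul (fun j => A j * B j) X := by
  funext i
  simp only [tmul, Matrix.mul_apply, Finset.sum_mul]
  rw [Finset.sum_comm]
  refine Finset.sum_congr rfl fun kk _ => ?_
  rw [Fintype.prod_sum (fun j x => A j (i j) x * B j x (kk j)), Finset.mul_sum]
  refine Finset.sum_congr rfl fun g _ => ?_
  rw [Finset.prod_mul_distrib]; ring

lemma sq_sum_eq (Y Z : (∀ j, Fin (n j)) → ℝ)
    (h : ∑ i, Z i * Z i = ∑ i, Y i * Z i) :
    ∑ i, (Z i) ^ 2 ≤ ∑ i, (Y i) ^ 2 := by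
  have h0 : (0:ℝ) ≤ ∑ i, (Y i - Z i)^2 := Finset.sum_nonneg fun i _ => sq_nonneg _
  have e : ∑ i, (Y i - Z i)^2
      = ∑ i, (Y i)^2 - 2 * (∑ i, Y i * Z i) + ∑ i, Z i * Z i := by
    rw [Finset.mul_sum, ← Finset.sum_sub_distrib, ← Finset.sum_add_distrib]
    exact Finset.sum_congr rfl fun i _ => by ring
  have e2 : ∑ i, (Z i)^2 = ∑ i, Z i * Z i :=
    Finset.sum_congr rfl fun i _ => sq (Z i) ▸ by ring
  linarith

lemma tmul_proj_nonexpansive (R : ∀ j, Matrix (Fin (n j)) (Fin (n j)) ℝ)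
    (hsym : ∀ k, (R k)ᵀ = R k) (hidem : ∀ k, R k * R k = R k)
    (Y : (∀ j, Fin (n j)) → ℝ) :
    ∑ i, (tmul R Y i) ^ 2 ≤ ∑ i, (Y i) ^ 2 := by
  refine sq_sum_eq Y (tmul R Y) ?_
  have h1 : ∑ i, tmul R Y i * tmul R Y i
      = ∑ i, Y i * tmul (fun j => (R j)ᵀ) (tmul R Y) i :=
    tmul_adjoint R Y (tmul R Y)
  rw [h1]
  congr 1
  funext i
  congr 1
  have : (fun j => (R j)ᵀ) = R := funext hsym
  rw [this, tmul_comp]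
  have : (fun j => R j * R j) = R := funext hidem
  rw [this]

lemma unfold_eq (X : (∀ k, Fin (n k)) → ℝ) (m : Fin d) (a : Fin (n m))
    (o : ∀ k : {k : Fin d // k ≠ m}, Fin (n k.1)) :
    unfold X m a o = X ((Equiv.piSplitAt m (fun k => Fin (n k))).symm (a, o)) := by
  unfold unfold
  simp only [Matrix.of_apply]
  congr 1
  funext k
  simp only [Equiv.piSplitAt_symm_apply]
  by_cases h : k = m
  · subst h; rfl
  · simp [h]

lemma single_ip (X : (∀ k, Fin (n k)) → ℝ) (m : Fin d)
    (B : ∀ k, Matrix (Fin (n k)) (Fin (n k)) ℝ) :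
    ∑ i, X i * tmul (fun k => if k = m then B k else 1) X i
      = ∑ a, ∑ b, B m a b * (unfold X m * (unfold X m)ᵀ) a b := by
  classical
  set e := Equiv.piSplitAt m (fun k => Fin (n k)) with he
  -- expand tmul
  have prodsplit : ∀ i jj : ∀ k, Fin (n k),
      (∏ k, (if k = m then B k else 1) (i k) (jj k))
        = B m (i m) (jj m) * (if ∀ k, k ≠ m → i k = jj k then 1 else 0) := by
    intro i jj
    rw [Finset.prod_eq_mul_prod_sdiff_singleton_of_mem (Finset.mem_univ m)
      (fun k => (if k = m then B k else 1) (i k) (jj k))]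
    simp only [if_pos rfl]
    congr 1
    have : ∀ k ∈ Finset.univ \ {m},
        (if k = m then B k else 1) (i k) (jj k) = if i k = jj k then (1:ℝ) else 0 := by
      intro k hk
      have hkm : k ≠ m := by simpa using (Finset.mem_sdiff.mp hk).2
      rw [if_neg hkm, Matrix.one_apply]
    rw [Finset.prod_congr rfl this, Finset.prod_boole]
    congr 1
    simp only [eq_iff_iff]
    constructor
    · intro h k hk
      exact h k (by simp [hk])
    · intro h k hk
      exact h k (by simpa using (Finset.mem_sdiff.mp hk).2)
  simp only [tmul, prodsplit, Finset.mul_sum]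
  -- reindex both sums over the splitting equivalence
  rw [← Equiv.sum_comp e.symm (fun i => ∑ jj : ∀ k, Fin (n k),
      X i * (X jj * (B m (i m) (jj m) * (if ∀ k, k ≠ m → i k = jj k then 1 else 0))))]
  rw [Fintype.sum_prod_type]
  refine Finset.sum_congr rfl fun a _ => ?_
  have hsm : ∀ (c : Fin (n m)) o, (e.symm (c,o)) m = c := fun c o => by
    simp [he, Equiv.piSplitAt_symm_apply]
  have hso : ∀ (c : Fin (n m)) o (k : Fin d) (h : k ≠ m), (e.symm (c,o)) k = o ⟨k,h⟩ :=
    fun c o k h => by simp [he, Equiv.piSplitAt_symm_apply, h]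
  have inner : ∀ o, (∑ jj : ∀ k, Fin (n k), X (e.symm (a,o)) *
        (X jj * (B m ((e.symm (a,o)) m) (jj m) *
          (if ∀ k, k ≠ m → (e.symm (a,o)) k = jj k then (1:ℝ) else 0))))
      = ∑ b, X (e.symm (a,o)) * (X (e.symm (b,o)) * B m a b) := by
    intro o
    refine Eq.trans (Fintype.sum_equiv e _
      (fun p => X (e.symm (a,o)) * (X (e.symm p) * (B m ((e.symm (a,o)) m) ((e.symm p) m) *
        (if ∀ k, k ≠ m → (e.symm (a,o)) k = (e.symm p) k then (1:ℝ) else 0))))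
      (fun jj => by simp only [Equiv.symm_apply_apply])) ?_
    rw [Fintype.sum_prod_type]
    have hcollapse : ∀ (b : Fin (n m)) o',
        (if ∀ k, k ≠ m → (e.symm (a,o)) k = (e.symm (b,o')) k then (1:ℝ) else 0)
          = if o = o' then 1 else 0 := by
      intro b o'
      congr 1
      simp only [eq_iff_iff]
      constructor
      · intro h; funext s
        have := h s.1 s.2
        rwa [hso a o s.1 s.2, hso b o' s.1 s.2] at this
      · intro h k hk
        rw [hso a o k hk, hso b o' k hk, h]
    simp only [hcollapse, hsm, mul_ite, mul_one, mul_zero, Finset.sum_ite_eq,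
      Finset.mem_univ, if_pos]
  rw [Finset.sum_congr rfl fun o _ => inner o, Finset.sum_comm]
  refine Finset.sum_congr rfl fun b _ => ?_
  rw [Matrix.mul_apply, Finset.mul_sum]
  refine Finset.sum_congr rfl fun o _ => ?_
  rw [Matrix.transpose_apply]
  rw [show unfold X m a o = X (e.symm (a,o)) from unfold_eq X m a o,
      show unfold X m b o = X (e.symm (b,o)) from unfold_eq X m b o]
  ring

end THosvd

namespace THosvd
variable {N R : ℕ}

lemma colK (hR : R ≤ N) (Φ : Matrix (Fin N) (Fin N) ℝ) (horth : Φᵀ * Φ = 1) :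
    Φᵀ * (Matrix.of fun a (k : Fin R) => Φ a (Fin.castLE hR k))
      = Matrix.of fun i (k : Fin R) => if i = Fin.castLE hR k then (1:ℝ) else 0 := by
  ext i k
  have := congrFun (congrFun horth i) (Fin.castLE hR k)
  simp only [Matrix.mul_apply, Matrix.transpose_apply, Matrix.of_apply,
    Matrix.one_apply] at *
  exact this

lemma colorth (hR : R ≤ N) (Φ : Matrix (Fin N) (Fin N) ℝ) (horth : Φᵀ * Φ = 1) :
    (Matrix.of fun a (k : Fin R) => Φ a (Fin.castLE hR k))ᵀ *
      (Matrix.of fun a (k : Fin R) => Φ a (Fin.castLE hR k)) = 1 := by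
  ext k k'
  have := congrFun (congrFun horth (Fin.castLE hR k)) (Fin.castLE hR k')
  simp only [Matrix.mul_apply, Matrix.transpose_apply, Matrix.of_apply, Matrix.one_apply] at *
  rw [this]
  simp [Fin.castLE_inj]

lemma gram_energy (hR : R ≤ N) (Φ : Matrix (Fin N) (Fin N) ℝ) (horth : Φᵀ * Φ = 1)
    (σ : Fin N → ℝ) :
    ∑ a, ∑ b, ((1 : Matrix (Fin N) (Fin N) ℝ) -
        (Matrix.of fun a (k : Fin R) => Φ a (Fin.castLE hR k)) *
        (Matrix.of fun a (k : Fin R) => Φ a (Fin.castLE hR k))ᵀ) a b *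
        (Φ * Matrix.diagonal (fun i => σ i ^ 2) * Φᵀ) a b
      = ∑ i ∈ Finset.univ.filter (fun i : Fin N => R ≤ (i : ℕ)), σ i ^ 2 := by
  set Φb : Matrix (Fin N) (Fin R) ℝ := Matrix.of fun a k => Φ a (Fin.castLE hR k) with hΦb
  set C : Matrix (Fin N) (Fin N) ℝ := Φ * Matrix.diagonal (fun i => σ i ^ 2) * Φᵀ with hC
  have hCsymm : ∀ a b, C a b = C b a := by
    intro a b
    have : Cᵀ = C := by
      rw [hC, Matrix.transpose_mul, Matrix.transpose_mul, Matrix.transpose_transpose,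
        Matrix.diagonal_transpose, Matrix.mul_assoc]
    exact (congrFun (congrFun this b) a).symm ▸ rfl
  have split : ∑ a, ∑ b, ((1 : Matrix (Fin N) (Fin N) ℝ) - Φb * Φbᵀ) a b * C a b
      = (∑ a, C a a) - ∑ a, ∑ b, (Φb * Φbᵀ) a b * C a b := by
    simp only [Matrix.sub_apply, sub_mul, Finset.sum_sub_distrib]
    congr 1
    refine Finset.sum_congr rfl fun a _ => ?_
    simp [Matrix.one_apply, ite_mul, Finset.sum_ite_eq]
  have t1 : ∑ a, C a a = ∑ i, σ i ^ 2 := by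
    have : ∑ a, C a a = Matrix.trace C := by
      simp [Matrix.trace, Matrix.diag]
    rw [this, hC, Matrix.trace_mul_cycle, horth, one_mul, Matrix.trace_diagonal]
  have tracelem : ∀ M : Matrix (Fin N) (Fin N) ℝ,
      Matrix.trace (M * C) = ∑ a, ∑ b, M a b * C b a := by
    intro M
    simp [Matrix.trace, Matrix.diag, Matrix.mul_apply]
  have t2 : ∑ a, ∑ b, (Φb * Φbᵀ) a b * C a b = ∑ k : Fin R, σ (Fin.castLE hR k) ^ 2 := by
    have e1 : ∑ a, ∑ b, (Φb * Φbᵀ) a b * C a b = Matrix.trace (Φb * Φbᵀ * C) := by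
      rw [tracelem]
      exact Finset.sum_congr rfl fun a _ => Finset.sum_congr rfl fun b _ => by
        rw [hCsymm a b]
    rw [e1, Matrix.trace_mul_cycle, Matrix.trace_mul_cycle]
    -- now trace (Φbᵀ * C * Φb)
    have e2 : Φbᵀ * C * Φb = (Φᵀ * Φb)ᵀ * Matrix.diagonal (fun i => σ i ^ 2) * (Φᵀ * Φb) := by
      rw [hC, Matrix.transpose_mul, Matrix.transpose_transpose]
      simp only [Matrix.mul_assoc]
    rw [e2, colK hR Φ horth]
    simp [Matrix.trace, Matrix.diag, Matrix.mul_apply, Matrix.diagonal_apply,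
      Matrix.of_apply, Matrix.transpose_apply, ite_mul, mul_ite,
      Finset.sum_ite_eq, Finset.sum_ite_eq']
  rw [split, t1, t2]
  have hfilt := Finset.sum_filter_add_sum_filter_not Finset.univ
    (fun i : Fin N => R ≤ (i : ℕ)) (fun i => σ i ^ 2)
  have hbij : ∑ i ∈ Finset.univ.filter (fun i : Fin N => ¬ R ≤ (i : ℕ)), σ i ^ 2
      = ∑ k : Fin R, σ (Fin.castLE hR k) ^ 2 := by
    refine Finset.sum_bij' (i := fun (a : Fin N) ha => (⟨(a : ℕ), by
        simpa [not_le] using (Finset.mem_filter.mp ha).2⟩ : Fin R))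
      (j := fun (k : Fin R) _ => Fin.castLE hR k) ?_ ?_ ?_ ?_ ?_
    · intro a ha; exact Finset.mem_univ _
    · intro k _
      simp [not_le, Fin.castLE, k.isLt]
    · intro a ha
      ext; simp [Fin.castLE]
    · intro k _
      ext; simp [Fin.castLE]
    · intro a ha
      congr 1
  linarith

end THosvd

namespace THosvd
variable {d : ℕ} {n : Fin d → ℕ}

lemma main_aux (X : (∀ k, Fin (n k)) → ℝ) (P : ∀ j, Matrix (Fin (n j)) (Fin (n j)) ℝ)
    (hPsym : ∀ j, (P j)ᵀ = P j) (hPidem : ∀ j, P j * P j = P j) :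
    ∑ i, (X i - tmul P X i) ^ 2
      ≤ ∑ m : Fin d, ∑ i, X i *
          tmul (fun k => if k = m then 1 - P k else 1) X i := by
  classical
  set Q : Fin d → ∀ k, Matrix (Fin (n k)) (Fin (n k)) ℝ :=
    fun m k => if k < m then P k else if k = m then 1 - P k else 1 with hQ
  set S : Fin d → ∀ k, Matrix (Fin (n k)) (Fin (n k)) ℝ :=
    fun m k => if k = m then 1 - P k else 1 with hS
  set T : Fin d → (∀ k, Fin (n k)) → ℝ := fun m => tmul (Q m) X with hT
  set G : ℕ → (∀ k, Fin (n k)) → ℝ :=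
    fun t => tmul (fun k => if (k : ℕ) < t then P k else 1) X with hG
  have hG0 : G 0 = X := by
    show tmul (fun k : Fin d => if (k : ℕ) < 0 then P k else 1) X = X
    have h1 : (fun k : Fin d => if (k : ℕ) < 0 then P k else 1)
        = fun _ => (1 : Matrix _ _ ℝ) := by funext k; simp
    rw [h1, tmul_one]
  have hGd : G d = tmul P X := by
    have h1 : (fun k : Fin d => if (k : ℕ) < d then P k else 1) = P := by
      funext k
      simp [k.isLt]
    show tmul (fun k : Fin d => if (k : ℕ) < d then P k else 1) X = tmul P X
    rw [h1]
  have hstep : ∀ m : Fin d, G (m : ℕ) - G ((m : ℕ) + 1) = T m := by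
    intro m
    show tmul (fun k : Fin d => if (k : ℕ) < (m : ℕ) then P k else 1) X
        - tmul (fun k : Fin d => if (k : ℕ) < (m : ℕ) + 1 then P k else 1) X
        = tmul (Q m) X
    refine tmul_sub_mode m _ _ _ (fun k hk => ⟨?_, ?_⟩) ?_ X
    · have hkm : (k : ℕ) ≠ (m : ℕ) := fun hh => hk (Fin.ext hh)
      by_cases h : (k : ℕ) < (m : ℕ)
      · have h2 : (k : ℕ) < (m : ℕ) + 1 := by omega
        simp [h, h2]
      · have h2 : ¬ (k : ℕ) < (m : ℕ) + 1 := by omega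
        simp [h, h2]
    · by_cases h : k < m
      · have h2 : (k : ℕ) < (m : ℕ) := h
        simp [hQ, h, h2]
      · have h2 : ¬ (k : ℕ) < (m : ℕ) := h
        simp [hQ, h, h2, hk]
    · have h1 : ¬ m < m := lt_irrefl m
      have h2 : ¬ (m : ℕ) < (m : ℕ) := lt_irrefl _
      have h3 : (m : ℕ) < (m : ℕ) + 1 := Nat.lt_succ_self _
      simp [hQ, h1, h2, h3]
  have stepA : ∀ i, X i - tmul P X i = ∑ m : Fin d, T m i := by
    intro i
    have tele : ∑ t ∈ Finset.range d, (G t - G (t + 1)) = G 0 - G d :=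
      Finset.sum_range_sub' G d
    have conv : ∑ m : Fin d, T m = ∑ t ∈ Finset.range d, (G t - G (t + 1)) := by
      rw [← Fin.sum_univ_eq_sum_range (fun t => G t - G (t + 1)) d]
      exact Finset.sum_congr rfl fun m _ => (hstep m).symm
    have hfun : ∑ m : Fin d, T m = X - tmul P X := by
      rw [conv, tele, hG0, hGd]
    calc X i - tmul P X i = (X - tmul P X) i := rfl
      _ = (∑ m : Fin d, T m) i := by rw [hfun]
      _ = ∑ m : Fin d, T m i := by simp
  have key : ∀ m m' : Fin d, m < m' → ∑ i, T m i * T m' i = 0 := by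
    intro m m' hlt
    have h0 : ((fun j => (Q m j)ᵀ * Q m' j) m) = 0 := by
      have e1 : Q m m = 1 - P m := by simp [hQ, lt_irrefl]
      have e2 : Q m' m = P m := by simp [hQ, hlt]
      show (Q m m)ᵀ * Q m' m = 0
      rw [e1, e2, Matrix.transpose_sub, Matrix.transpose_one, hPsym,
        sub_mul, one_mul, hPidem, sub_self]
    have e3 : ∑ i, T m i * T m' i
        = ∑ i, X i * tmul (fun j => (Q m j)ᵀ) (tmul (Q m') X) i :=
      tmul_adjoint _ _ _
    rw [e3, tmul_comp, tmul_zero_of _ m h0 X]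
    simp
  have ortho : ∀ m m' : Fin d, m ≠ m' → ∑ i, T m i * T m' i = 0 := by
    intro m m' hne
    rcases lt_or_gt_of_ne hne with h | h
    · exact key m m' h
    · rw [Finset.sum_congr rfl fun i _ => mul_comm (T m i) (T m' i)]
      exact key m' m h
  have stepB : ∑ i, (X i - tmul P X i) ^ 2 = ∑ m : Fin d, ∑ i, (T m i) ^ 2 := by
    have e : ∀ i : ∀ k, Fin (n k), (X i - tmul P X i) ^ 2
        = ∑ m : Fin d, ∑ m' : Fin d, T m i * T m' i := by
      intro i
      rw [stepA i, sq, Finset.sum_mul_sum]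
    rw [Finset.sum_congr rfl fun i _ => e i, Finset.sum_comm]
    refine Finset.sum_congr rfl fun m _ => ?_
    rw [Finset.sum_comm]
    rw [Finset.sum_eq_single m (fun m' _ hne => ortho m m' (Ne.symm hne))
      (fun h => absurd (Finset.mem_univ m) h)]
    exact Finset.sum_congr rfl fun i _ => (sq (T m i)).symm ▸ rfl
  rw [stepB]
  refine Finset.sum_le_sum fun m _ => ?_
  show ∑ i, (T m i) ^ 2 ≤ ∑ i, X i * tmul (S m) X i
  have hfam : (fun k => (if k < m then P k else 1) * S m k) = Q m := by
    funext k
    show (if k < m then P k else 1) * S m k = Q m k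
    by_cases h1 : k < m
    · have h2 : k ≠ m := ne_of_lt h1
      simp [hQ, hS, h1, h2]
    · by_cases h2 : k = m
      · simp [hQ, hS, h1, h2]
      · simp [hQ, hS, h1, h2]
  have hTm : T m = tmul (fun k => if k < m then P k else 1) (tmul (S m) X) := by
    rw [tmul_comp, hfam, hT]
  have hC : ∑ i, (T m i) ^ 2 ≤ ∑ i, (tmul (S m) X i) ^ 2 := by
    rw [hTm]
    refine tmul_proj_nonexpansive _ (fun k => ?_) (fun k => ?_) _
    · by_cases h : k < m <;> simp [h, hPsym]
    · by_cases h : k < m <;> simp [h, hPidem]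
  have hD : ∑ i, (tmul (S m) X i) ^ 2 = ∑ i, X i * tmul (S m) X i := by
    have e1 : ∑ i, (tmul (S m) X i) ^ 2
        = ∑ i, tmul (S m) X i * tmul (S m) X i :=
      Finset.sum_congr rfl fun i _ => by rw [sq]
    rw [e1, tmul_adjoint]
    have e2 : (fun j => ((S m) j)ᵀ) = S m := by
      funext k
      by_cases h : k = m <;>
        simp [hS, h, Matrix.transpose_sub, Matrix.transpose_one, hPsym]
    rw [e2, tmul_comp]
    have e3 : (fun j => S m j * S m j) = S m := by
      funext k
      by_cases h : k = m
      · show S m k * S m k = S m k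
        have hk : S m k = 1 - P k := by simp [hS, h]
        rw [hk, sub_mul, one_mul, mul_sub, mul_one, hPidem, sub_self, sub_zero]
      · show S m k * S m k = S m k
        have hk : S m k = 1 := by simp [hS, h]
        rw [hk, one_mul]
    rw [e3]
  exact hC.trans (le_of_eq hD)

end THosvd

/-- T-HOSVD quasi-optimality upper bound: if, for each mode `j`, `Φ j` is an
orthogonal matrix of left singular vectors of the mode-`j` unfolding (i.e.
`𝒳_{(j)} 𝒳_{(j)}ᵀ = Φ diag(σ²) Φᵀ` with `σ` nonincreasing and nonnegative), and
`Φ̄ j` consists of its first `r j` columns, then the truncation error of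
`𝒳̄ = (Φ̄¹(Φ̄¹)ᵀ,…,Φ̄ᵈ(Φ̄ᵈ)ᵀ)·𝒳` satisfies
`‖𝒳 − 𝒳̄‖_F² ≤ Σ_j Σ_{i > r_j} σ_i(𝒳_{(j)})²`. -/
theorem stmt_15 {d : ℕ} {n : Fin d → ℕ} (X : (∀ k, Fin (n k)) → ℝ)
    (r : Fin d → ℕ) (hr : ∀ j, r j ≤ n j)
    (Φ : ∀ j, Matrix (Fin (n j)) (Fin (n j)) ℝ)
    (horth : ∀ j, (Φ j)ᵀ * Φ j = 1)
    (σ : ∀ j, Fin (n j) → ℝ)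
    (hσnonneg : ∀ j i, 0 ≤ σ j i)
    (hσmono : ∀ j, ∀ i i' : Fin (n j), i ≤ i' → σ j i' ≤ σ j i)
    (hsvd : ∀ j, unfold X j * (unfold X j)ᵀ
        = Φ j * Matrix.diagonal (fun i => σ j i ^ 2) * (Φ j)ᵀ) :
    (∑ i, (X i - tmul (fun j =>
        (Matrix.of fun a (k : Fin (r j)) => Φ j a (Fin.castLE (hr j) k)) *
        (Matrix.of fun a (k : Fin (r j)) => Φ j a (Fin.castLE (hr j) k))ᵀ) X i) ^ 2)
      ≤ ∑ j, ∑ i ∈ Finset.univ.filter (fun i : Fin (n j) => r j ≤ (i : ℕ)),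
          σ j i ^ 2 := by
  classical
  set P : ∀ j, Matrix (Fin (n j)) (Fin (n j)) ℝ := fun j =>
    (Matrix.of fun a (k : Fin (r j)) => Φ j a (Fin.castLE (hr j) k)) *
    (Matrix.of fun a (k : Fin (r j)) => Φ j a (Fin.castLE (hr j) k))ᵀ with hP
  have hPsym : ∀ j, (P j)ᵀ = P j := by
    intro j
    rw [hP]
    show ((Matrix.of fun a (k : Fin (r j)) => Φ j a (Fin.castLE (hr j) k)) *
      (Matrix.of fun a (k : Fin (r j)) => Φ j a (Fin.castLE (hr j) k))ᵀ)ᵀ = _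
    rw [Matrix.transpose_mul, Matrix.transpose_transpose]
  have hPidem : ∀ j, P j * P j = P j := by
    intro j
    have hco := THosvd.colorth (hr j) (Φ j) (horth j)
    show ((Matrix.of fun a (k : Fin (r j)) => Φ j a (Fin.castLE (hr j) k)) *
        (Matrix.of fun a (k : Fin (r j)) => Φ j a (Fin.castLE (hr j) k))ᵀ) *
      ((Matrix.of fun a (k : Fin (r j)) => Φ j a (Fin.castLE (hr j) k)) *
        (Matrix.of fun a (k : Fin (r j)) => Φ j a (Fin.castLE (hr j) k))ᵀ) = _
    calc ((Matrix.of fun a (k : Fin (r j)) => Φ j a (Fin.castLE (hr j) k)) *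
        (Matrix.of fun a (k : Fin (r j)) => Φ j a (Fin.castLE (hr j) k))ᵀ) *
      ((Matrix.of fun a (k : Fin (r j)) => Φ j a (Fin.castLE (hr j) k)) *
        (Matrix.of fun a (k : Fin (r j)) => Φ j a (Fin.castLE (hr j) k))ᵀ)
        = (Matrix.of fun a (k : Fin (r j)) => Φ j a (Fin.castLE (hr j) k)) *
          (((Matrix.of fun a (k : Fin (r j)) => Φ j a (Fin.castLE (hr j) k))ᵀ *
            (Matrix.of fun a (k : Fin (r j)) => Φ j a (Fin.castLE (hr j) k))) *
          (Matrix.of fun a (k : Fin (r j)) => Φ j a (Fin.castLE (hr j) k))ᵀ) := by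
          simp only [Matrix.mul_assoc]
      _ = _ := by rw [hco, Matrix.one_mul]
  refine le_trans (THosvd.main_aux X P hPsym hPidem) (le_of_eq ?_)
  refine Finset.sum_congr rfl fun m _ => ?_
  have e1 : (∑ i, X i * tmul (fun k => if k = m then 1 - P k else 1) X i)
      = ∑ a, ∑ b, ((1 : Matrix (Fin (n m)) (Fin (n m)) ℝ) - P m) a b *
          (unfold X m * (unfold X m)ᵀ) a b :=
    THosvd.single_ip X m (fun k => 1 - P k)
  have e2 : ∑ a, ∑ b, ((1 : Matrix (Fin (n m)) (Fin (n m)) ℝ) - P m) a b *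
        (Φ m * Matrix.diagonal (fun i => σ m i ^ 2) * (Φ m)ᵀ) a b
      = ∑ i ∈ Finset.univ.filter (fun i : Fin (n m) => r m ≤ (i : ℕ)), σ m i ^ 2 :=
    THosvd.gram_energy (hr m) (Φ m) (horth m) (σ m)
  rw [e1, hsvd m, e2]
end

section
/- T-HOSVD lower error bound: with 𝒳 and 𝒳̄ as in the truncated HOSVD (projections Π_j = Φ̄^{(j)}(Φ̄^{(j)})ᵀ onto the leading r_j left singular subspaces of each unfolding applied along every mode), one has max_{1≤j≤d} Σ_{i>r_j} σ_i(𝒳_{(j)})² ≤ ‖𝒳 − 𝒳̄‖_F². -/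
open Matrix

lemma trace_transpose_mul_self_eq {m o : Type*} [Fintype m] [Fintype o]
    (A : Matrix m o ℝ) : Matrix.trace (Aᵀ * A) = ∑ k, ∑ i, (A i k) ^ 2 := by
  simp [Matrix.trace, Matrix.mul_apply, Matrix.diag, sq]

lemma trace_transpose_mul_self_nonneg {m o : Type*} [Fintype m] [Fintype o]
    (A : Matrix m o ℝ) : 0 ≤ Matrix.trace (Aᵀ * A) := by
  rw [trace_transpose_mul_self_eq]; positivity

lemma proj_trace_le {m o : Type*} [Fintype m] [DecidableEq m] [Fintype o]
    (P : Matrix m m ℝ) (hPT : Pᵀ = P) (hP2 : P * P = P) (M : Matrix m o ℝ) :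
    Matrix.trace ((((1 : Matrix m m ℝ) - P) * M)ᵀ * (((1 : Matrix m m ℝ) - P) * M))
      ≤ Matrix.trace (Mᵀ * M) := by
  set N : Matrix m m ℝ := 1 - P with hN
  have hNT : Nᵀ = N := by simp [hN, transpose_sub, hPT]
  have hN2 : N * N = N := by
    simp only [hN, sub_mul, mul_sub, one_mul, mul_one, hP2, Matrix.mul_assoc]
    abel
  have key : (N * M)ᵀ * (N * M) = Mᵀ * N * M := by
    rw [transpose_mul, hNT, Matrix.mul_assoc, ← Matrix.mul_assoc N N M, hN2, Matrix.mul_assoc]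
  have keyP : (P * M)ᵀ * (P * M) = Mᵀ * P * M := by
    rw [transpose_mul, hPT, Matrix.mul_assoc, ← Matrix.mul_assoc P P M, hP2, Matrix.mul_assoc]
  have hsplit : Mᵀ * M = Mᵀ * P * M + Mᵀ * N * M := by
    rw [Matrix.mul_assoc, Matrix.mul_assoc, ← Matrix.mul_add, ← Matrix.add_mul]
    simp [hN]
  rw [key, hsplit, Matrix.trace_add]
  have := trace_transpose_mul_self_nonneg (P * M)
  rw [keyP] at this
  linarith

/-- T-HOSVD lower error bound: if, for each mode `j`, `Φ j` is an
orthogonal matrix of left singular vectors of the mode-`j` unfolding (i.e.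
`𝒳_{(j)} 𝒳_{(j)}ᵀ = Φ diag(σ²) Φᵀ` with `σ` nonincreasing and nonnegative), and
`Φ̄ j` consists of its first `r j` columns, then the truncation error of
`𝒳̄ = (Φ̄¹(Φ̄¹)ᵀ,…,Φ̄ᵈ(Φ̄ᵈ)ᵀ)·𝒳` satisfies
`max_j Σ_{i > r_j} σ_i(𝒳_{(j)})² ≤ ‖𝒳 − 𝒳̄‖_F²`. -/
theorem stmt_16 {d : ℕ} {n : Fin d → ℕ} (X : (∀ k, Fin (n k)) → ℝ)
    (r : Fin d → ℕ) (hr : ∀ j, r j ≤ n j)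
    (Φ : ∀ j, Matrix (Fin (n j)) (Fin (n j)) ℝ)
    (horth : ∀ j, (Φ j)ᵀ * Φ j = 1)
    (σ : ∀ j, Fin (n j) → ℝ)
    (hσnonneg : ∀ j i, 0 ≤ σ j i)
    (hσmono : ∀ j, ∀ i i' : Fin (n j), i ≤ i' → σ j i' ≤ σ j i)
    (hsvd : ∀ j, unfold X j * (unfold X j)ᵀ
        = Φ j * Matrix.diagonal (fun i => σ j i ^ 2) * (Φ j)ᵀ) :
    ∀ j, (∑ i ∈ Finset.univ.filter (fun i : Fin (n j) => r j ≤ (i : ℕ)), σ j i ^ 2)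
      ≤ ∑ i, (X i - tmul (fun j =>
        (Matrix.of fun a (k : Fin (r j)) => Φ j a (Fin.castLE (hr j) k)) *
        (Matrix.of fun a (k : Fin (r j)) => Φ j a (Fin.castLE (hr j) k))ᵀ) X i) ^ 2 := by
  intro j
  set Pm : ∀ j', Matrix (Fin (n j')) (Fin (n j')) ℝ := fun j' =>
    (Matrix.of fun a (k : Fin (r j')) => Φ j' a (Fin.castLE (hr j') k)) *
    (Matrix.of fun a (k : Fin (r j')) => Φ j' a (Fin.castLE (hr j') k))ᵀ with hPm
  set Xb : (∀ k, Fin (n k)) → ℝ := tmul Pm X with hXb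
  set Φb : Matrix (Fin (n j)) (Fin (r j)) ℝ :=
    Matrix.of fun a (k : Fin (r j)) => Φ j a (Fin.castLE (hr j) k) with hΦb
  set P : Matrix (Fin (n j)) (Fin (n j)) ℝ := Φb * Φbᵀ with hP
  have hPmj : Pm j = P := rfl
  have hΦorth : ∀ a b : Fin (n j), (∑ c, Φ j c a * Φ j c b) = if a = b then 1 else 0 := by
    intro a b
    have := congrFun (congrFun (horth j) a) b
    simpa [Matrix.mul_apply, Matrix.one_apply, Matrix.transpose_apply] using this
  have hΦbo : Φbᵀ * Φb = 1 := by
    ext k k'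
    simp only [Matrix.mul_apply, Matrix.transpose_apply, hΦb, Matrix.of_apply]
    rw [hΦorth]
    simp [Matrix.one_apply, Fin.castLE, Fin.ext_iff]
  have hPT : Pᵀ = P := by rw [hP, transpose_mul, transpose_transpose]
  have hP2 : P * P = P := by
    rw [hP, Matrix.mul_assoc, ← Matrix.mul_assoc Φbᵀ Φb Φbᵀ, hΦbo, Matrix.one_mul]
  set bld : Fin (n j) → (∀ k : {k : Fin d // k ≠ j}, Fin (n k.1)) → (∀ k, Fin (n k)) :=
    fun a o k => if h : k = j then cast (congrArg (fun t => Fin (n t)) h).symm a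
                 else o ⟨k, h⟩ with hbld
  have hUdef : ∀ (Y : (∀ k, Fin (n k)) → ℝ) a o, unfold Y j a o = Y (bld a o) := fun _ _ _ => rfl
  have hbldj : ∀ a o, bld a o j = a := by intro a o; simp [hbld]
  have hbldne : ∀ a o k (h : k ≠ j), bld a o k = o ⟨k, h⟩ := by
    intro a o k h; simp [hbld, h]
  have hsum : ∀ f : (∀ k, Fin (n k)) → ℝ, (∑ i, f i) = ∑ a, ∑ o, f (bld a o) := by
    intro f
    let e : (Fin (n j) × (∀ k : {k : Fin d // k ≠ j}, Fin (n k.1))) ≃ (∀ k, Fin (n k)) :=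
      { toFun := fun p => bld p.1 p.2
        invFun := fun i => (i j, fun k => i k.1)
        left_inv := by
          rintro ⟨a, o⟩
          refine Prod.ext (hbldj a o) ?_
          funext k
          exact hbldne a o k.1 k.2
        right_inv := by
          intro i
          funext k
          by_cases h : k = j
          · subst h; exact hbldj (i k) _
          · exact hbldne (i j) _ k h }
    rw [← Equiv.sum_comp e f, Fintype.sum_prod_type]
    rfl
  have hPU : P * unfold Xb j = unfold Xb j := by
    ext a o
    rw [Matrix.mul_apply]
    simp only [hUdef]
    have hXbv : ∀ i, Xb i = ∑ jj, X jj * ∏ k, Pm k (i k) (jj k) := fun _ => rfl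
    set Q : (∀ k, Fin (n k)) → ℝ :=
      fun jj => ∏ k ∈ Finset.univ.erase j, Pm k (bld a o k) (jj k) with hQ
    have hprod : ∀ b jj, (∏ k, Pm k (bld b o k) (jj k)) = P b (jj j) * Q jj := by
      intro b jj
      rw [← Finset.mul_prod_erase Finset.univ _ (Finset.mem_univ j)]
      congr 1
      · rw [hbldj, hPmj]
      · refine Finset.prod_congr rfl fun k hk => ?_
        have h : k ≠ j := (Finset.mem_erase.mp hk).1
        rw [hbldne b o k h, hbldne a o k h]
    calc (∑ b, P a b * Xb (bld b o))
        = ∑ b, ∑ jj, P a b * (X jj * (P b (jj j) * Q jj)) := by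
          refine Finset.sum_congr rfl fun b _ => ?_
          rw [hXbv, Finset.mul_sum]
          exact Finset.sum_congr rfl fun jj _ => by rw [hprod]
      _ = ∑ jj, ∑ b, P a b * (X jj * (P b (jj j) * Q jj)) := Finset.sum_comm
      _ = ∑ jj, X jj * Q jj * ((P * P) a (jj j)) := by
          refine Finset.sum_congr rfl fun jj _ => ?_
          rw [Matrix.mul_apply, Finset.mul_sum]
          exact Finset.sum_congr rfl fun b _ => by ring
      _ = Xb (bld a o) := by
          rw [hXbv]
          exact Finset.sum_congr rfl fun jj _ => by rw [hP2, hprod]; ring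
  set U := unfold X j with hU
  set N : Matrix (Fin (n j)) (Fin (n j)) ℝ := 1 - P with hNdef
  have hNUb : N * unfold Xb j = 0 := by
    rw [hNdef, Matrix.sub_mul, Matrix.one_mul, hPU, sub_self]
  set M := U - unfold Xb j with hM
  have hNM : N * M = N * U := by
    rw [hM, Matrix.mul_sub, hNUb, sub_zero]
  have hNT : Nᵀ = N := by simp [hNdef, transpose_sub, hPT]
  have hN2 : N * N = N := by
    simp only [hNdef, sub_mul, mul_sub, one_mul, mul_one, hP2, Matrix.mul_assoc]
    abel
  have htail : Matrix.trace ((N * U)ᵀ * (N * U))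
      = ∑ i ∈ Finset.univ.filter (fun i : Fin (n j) => r j ≤ (i : ℕ)), σ j i ^ 2 := by
    have h1 : (N * U)ᵀ * (N * U) = Uᵀ * N * U := by
      rw [transpose_mul, hNT, Matrix.mul_assoc, ← Matrix.mul_assoc N N U, hN2, Matrix.mul_assoc]
    rw [h1, Matrix.mul_assoc, Matrix.trace_mul_comm, Matrix.mul_assoc, hU, hsvd j]
    have h2 : N * (Φ j * Matrix.diagonal (fun i => σ j i ^ 2) * (Φ j)ᵀ)
        = (N * Φ j * Matrix.diagonal (fun i => σ j i ^ 2)) * (Φ j)ᵀ := by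
      simp only [Matrix.mul_assoc]
    rw [h2, Matrix.trace_mul_comm, ← Matrix.mul_assoc, ← Matrix.mul_assoc]
    have h3 : Matrix.trace ((Φ j)ᵀ * N * Φ j * Matrix.diagonal (fun i => σ j i ^ 2))
        = ∑ i, ((Φ j)ᵀ * N * Φ j) i i * σ j i ^ 2 := by
      simp [Matrix.trace, Matrix.diag, Matrix.mul_diagonal]
    rw [h3]
    have hdiag : ∀ i : Fin (n j), ((Φ j)ᵀ * N * Φ j) i i
        = if r j ≤ (i : ℕ) then 1 else 0 := by
      intro i
      have hPdiag : ((Φ j)ᵀ * P * Φ j) i i = if (i : ℕ) < r j then 1 else 0 := by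
        have hsplit : (Φ j)ᵀ * P * Φ j = ((Φ j)ᵀ * Φb) * ((Φ j)ᵀ * Φb)ᵀ := by
          rw [hP, transpose_mul, ← Matrix.mul_assoc, ← Matrix.mul_assoc, transpose_transpose]
        have hG : ∀ (i' : Fin (n j)) (k : Fin (r j)), ((Φ j)ᵀ * Φb) i' k
            = if i' = Fin.castLE (hr j) k then (1:ℝ) else 0 := by
          intro i' k
          simp only [Matrix.mul_apply, Matrix.transpose_apply, hΦb, Matrix.of_apply]
          rw [hΦorth]
        rw [hsplit, Matrix.mul_apply]
        simp only [Matrix.transpose_apply, hG]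
        by_cases h : (i : ℕ) < r j
        · have h0 : ∀ k ∈ Finset.univ, k ≠ (⟨(i : ℕ), h⟩ : Fin (r j)) →
              (if i = Fin.castLE (hr j) k then (1:ℝ) else 0) *
              (if i = Fin.castLE (hr j) k then (1:ℝ) else 0) = 0 := by
            intro k _ hk
            have hne : i ≠ Fin.castLE (hr j) k := by
              intro hc
              exact hk (Fin.ext (by simp [hc]))
            rw [if_neg hne, zero_mul]
          have h1' : ((⟨(i : ℕ), h⟩ : Fin (r j)) ∉ (Finset.univ : Finset (Fin (r j)))) →
              (if i = Fin.castLE (hr j) (⟨(i : ℕ), h⟩ : Fin (r j)) then (1:ℝ) else 0) *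
              (if i = Fin.castLE (hr j) (⟨(i : ℕ), h⟩ : Fin (r j)) then (1:ℝ) else 0) = 0 := by
            intro hmem; exact absurd (Finset.mem_univ _) hmem
          rw [if_pos h, Finset.sum_eq_single (⟨(i : ℕ), h⟩ : Fin (r j)) h0 h1']
          simp [Fin.ext_iff]
        · rw [if_neg h]
          refine Finset.sum_eq_zero fun k _ => ?_
          have hne : i ≠ Fin.castLE (hr j) k := by
            intro hc
            exact h (by rw [hc]; exact k.isLt)
          rw [if_neg hne, zero_mul]
      have hId : ((Φ j)ᵀ * (1 : Matrix (Fin (n j)) (Fin (n j)) ℝ) * Φ j) i i = 1 := by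
        rw [Matrix.mul_one, horth j, Matrix.one_apply_eq]
      have hsub : (Φ j)ᵀ * N * Φ j = (Φ j)ᵀ * 1 * Φ j - (Φ j)ᵀ * P * Φ j := by
        rw [hNdef, Matrix.mul_sub, Matrix.sub_mul]
      rw [hsub, Matrix.sub_apply, hId, hPdiag]
      by_cases h : (i : ℕ) < r j
      · rw [if_pos h, if_neg (by omega)]; ring
      · rw [if_neg h, if_pos (by omega)]; ring
    rw [Finset.sum_filter]
    refine Finset.sum_congr rfl fun i _ => ?_
    rw [hdiag]
    by_cases h : r j ≤ (i : ℕ) <;> simp [h]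
  have hrhs : (∑ i, (X i - Xb i) ^ 2) = Matrix.trace (Mᵀ * M) := by
    rw [trace_transpose_mul_self_eq, hsum (fun i => (X i - Xb i) ^ 2), Finset.sum_comm]
    refine Finset.sum_congr rfl fun o _ => Finset.sum_congr rfl fun a _ => ?_
    rw [hM, Matrix.sub_apply, hU, hUdef, hUdef]
  rw [hrhs, ← htail, ← hNM, hNdef]
  exact proj_trace_le P hPT hP2 M
end
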